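/- In ℝ², let K := {(x₁,x₂) ∈ ℝ² : x₁² + x₂² ≤ 1 and x₂ ≤ 5|x₁|} and Ω := B₂ ∖ K (B₂ the open ball of radius 2 centered at the origin). Let s ∈ (0,1) be such that Per_s(K,ℝ²) > Per_s(B₁,ℝ²). Then every measurable set E ⊂ ℝ² that minimizes Per_s(·,Ω) among all measurable F ⊂ ℝ² with F ∖ Ω = K (up to null sets) satisfies 0 < |E ∩ Ω| < |Ω|, where |·| denotes two-dimensional Lebesgue measure. -/

import Mathlib

open MeasureTheory Filter
open scoped ENNReal NNReal

noncomputable section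

/-- The fractional kernel `|x - y| ^ (-n - s)`. -/
def fracKernel (n : ℕ) (s : ℝ) (x y : EuclideanSpace ℝ (Fin n)) : ℝ :=
  dist x y ^ (-(n : ℝ) - s)

/-- The cross-shaped domain `Q(Ω) = (ℝⁿ × ℝⁿ) \ (𝒞Ω × 𝒞Ω)`. -/
def crossQ (n : ℕ) (Ω : Set (EuclideanSpace ℝ (Fin n))) :
    Set (EuclideanSpace ℝ (Fin n) × EuclideanSpace ℝ (Fin n)) :=
  (Ωᶜ ×ˢ Ωᶜ)ᶜ

/-- The fractional `s`-perimeter `Per_s(E, Ω)` of `E` in `Ω`. -/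
def fracPer (n : ℕ) (s : ℝ) (E Ω : Set (EuclideanSpace ℝ (Fin n))) : ℝ≥0∞ :=
  (1 / 2) * ∫⁻ p in crossQ n Ω,
    ENNReal.ofReal
      (|Set.indicator E (fun _ => (1 : ℝ)) p.1 - Set.indicator E (fun _ => (1 : ℝ)) p.2| *
        fracKernel n s p.1 p.2)

/-- The set `K = {x₁² + x₂² ≤ 1 and x₂ ≤ 5|x₁|} ⊆ ℝ²`. -/
def Kset : Set (EuclideanSpace ℝ (Fin 2)) :=
  {x | x 0 ^ 2 + x 1 ^ 2 ≤ 1 ∧ x 1 ≤ 5 * |x 0|}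

/-- The open unit ball `B₁ ⊆ ℝ²` centered at the origin. -/
def Bone : Set (EuclideanSpace ℝ (Fin 2)) := Metric.ball 0 1

/-- The open ball `B₂ ⊆ ℝ²` of radius `2` centered at the origin. -/
def Btwo : Set (EuclideanSpace ℝ (Fin 2)) := Metric.ball 0 2

/-- The open set `Ω = B₂ \ K`. -/
def Ωex : Set (EuclideanSpace ℝ (Fin 2)) := Btwo \ Kset

/-!
The closed unit ball `B̄₁` coincides with `K` outside `Ω`, so it is an admissible competitor and
`Per_s(E, Ω) ≤ Per_s(B̄₁, Ω)`. The full perimeter `Per_s(F, ℝ²)` is `Per_s(F, Ω)` plus the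
interactions in `Ωᶜ × Ωᶜ`, which only depend on `F \ Ω`; hence every `F` with `F = E` a.e. and
`F \ Ω = K` has `Per_s(F, ℝ²) ≤ Per_s(B̄₁, ℝ²) = Per_s(B₁, ℝ²)`. If `|E ∩ Ω| = 0` this applies to
`F = K`, contradicting the hypothesis; if `|E ∩ Ω| = |Ω|` it applies to `F = B₂ = 2 • B₁`, whose
perimeter is `2 ^ (2 - s) Per_s(B₁, ℝ²) > Per_s(B₁, ℝ²)` by scaling.
-/

open scoped Pointwise
open Set Metric

lemma lintegral_comp_smul_of_isAddHaarMeasure {V : Type*} [NormedAddCommGroup V]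
    [NormedSpace ℝ V] [MeasurableSpace V] [BorelSpace V] [FiniteDimensional ℝ V]
    (μ : Measure V) [μ.IsAddHaarMeasure] {r : ℝ} (hr : r ≠ 0) (f : V → ℝ≥0∞) :
    ∫⁻ x, f (r • x) ∂μ = ENNReal.ofReal |(r ^ Module.finrank ℝ V)⁻¹| * ∫⁻ x, f x ∂μ := by
  rw [← (measurableEmbedding_const_smul₀ hr).lintegral_map, Measure.map_addHaar_smul μ hr,
    lintegral_smul_measure, smul_eq_mul]

section FracPer

variable {n : ℕ} {s : ℝ} {E F Ω : Set (EuclideanSpace ℝ (Fin n))}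

def fracPerIntegrand (n : ℕ) (s : ℝ) (E : Set (EuclideanSpace ℝ (Fin n)))
    (p : EuclideanSpace ℝ (Fin n) × EuclideanSpace ℝ (Fin n)) : ℝ≥0∞ :=
  ENNReal.ofReal
    (|Set.indicator E (fun _ => (1 : ℝ)) p.1 - Set.indicator E (fun _ => (1 : ℝ)) p.2| *
      fracKernel n s p.1 p.2)

lemma fracPer_eq_lintegral (n : ℕ) (s : ℝ) (E Ω : Set (EuclideanSpace ℝ (Fin n))) :
    fracPer n s E Ω = 1 / 2 * ∫⁻ p in crossQ n Ω, fracPerIntegrand n s E p := rfl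

lemma fracPer_univ_eq_lintegral (n : ℕ) (s : ℝ) (E : Set (EuclideanSpace ℝ (Fin n))) :
    fracPer n s E univ = 1 / 2 * ∫⁻ p, fracPerIntegrand n s E p := by
  rw [fracPer_eq_lintegral, crossQ, compl_univ, prod_empty, compl_empty, Measure.restrict_univ]

lemma fracPerIntegrand_congr {p : EuclideanSpace ℝ (Fin n) × EuclideanSpace ℝ (Fin n)}
    (h₁ : p.1 ∈ E ↔ p.1 ∈ F) (h₂ : p.2 ∈ E ↔ p.2 ∈ F) :
    fracPerIntegrand n s E p = fracPerIntegrand n s F p := by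
  unfold fracPerIntegrand
  classical
  simp only [Set.indicator_apply, h₁, h₂]

lemma fracPer_congr_ae (h : E =ᵐ[volume] F) (Ω : Set (EuclideanSpace ℝ (Fin n))) :
    fracPer n s E Ω = fracPer n s F Ω := by
  rw [fracPer_eq_lintegral, fracPer_eq_lintegral]
  congr 1
  refine lintegral_congr_ae (ae_restrict_of_ae ?_)
  filter_upwards [Measure.quasiMeasurePreserving_fst.ae_eq_comp h,
    Measure.quasiMeasurePreserving_snd.ae_eq_comp h] with p hp₁ hp₂
  exact fracPerIntegrand_congr (Iff.of_eq hp₁) (Iff.of_eq hp₂)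

lemma measurable_fracPerIntegrand (hE : MeasurableSet E) :
    Measurable (fracPerIntegrand n s E) := by
  unfold fracPerIntegrand fracKernel
  fun_prop (disch := exact hE)

lemma fracPer_univ_pos (hE : MeasurableSet E) (h₀ : volume E ≠ 0) (h₁ : volume Eᶜ ≠ 0) :
    0 < fracPer n s E univ := by
  have hsupp : E ×ˢ Eᶜ ⊆ Function.support (fracPerIntegrand n s E) := by
    rintro ⟨x, y⟩ ⟨hx, hy⟩
    have hxy : 0 < dist x y := dist_pos.2 fun h => hy (h ▸ hx)
    simp only [Function.mem_support, fracPerIntegrand, fracKernel, ne_eq, ENNReal.ofReal_eq_zero,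
      not_le, Set.indicator_of_mem hx, Set.indicator_of_notMem hy, sub_zero, abs_one, one_mul]
    exact Real.rpow_pos_of_pos hxy _
  have hprod : volume (E ×ˢ Eᶜ) ≠ 0 := by
    rw [Measure.volume_eq_prod, Measure.prod_prod]
    exact mul_ne_zero h₀ h₁
  rw [fracPer_univ_eq_lintegral]
  refine ENNReal.mul_pos (by norm_num) (ne_of_gt ?_)
  rw [lintegral_pos_iff_support (measurable_fracPerIntegrand hE)]
  exact pos_iff_ne_zero.2 fun h => hprod (measure_mono_null hsupp h)

lemma fracPer_univ_eq_add (hΩ : MeasurableSet Ω) (E : Set (EuclideanSpace ℝ (Fin n))) :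
    fracPer n s E univ =
      fracPer n s E Ω + 1 / 2 * ∫⁻ p in Ωᶜ ×ˢ Ωᶜ, fracPerIntegrand n s E p := by
  rw [fracPer_univ_eq_lintegral, fracPer_eq_lintegral, crossQ,
    ← lintegral_add_compl _ (hΩ.compl.prod hΩ.compl).compl, compl_compl, mul_add]

lemma fracPer_univ_le_of_diff_eq (hΩ : MeasurableSet Ω) (hEF : E \ Ω = F \ Ω)
    (h : fracPer n s E Ω ≤ fracPer n s F Ω) : fracPer n s E univ ≤ fracPer n s F univ := by
  have hout : ∀ x ∉ Ω, x ∈ E ↔ x ∈ F := fun x hx => by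
    simpa [hx] using Set.ext_iff.1 hEF x
  have htail : ∫⁻ p in Ωᶜ ×ˢ Ωᶜ, fracPerIntegrand n s E p =
      ∫⁻ p in Ωᶜ ×ˢ Ωᶜ, fracPerIntegrand n s F p :=
    setLIntegral_congr_fun (hΩ.compl.prod hΩ.compl) fun p hp =>
      fracPerIntegrand_congr (hout _ hp.1) (hout _ hp.2)
  rw [fracPer_univ_eq_add hΩ, fracPer_univ_eq_add hΩ, htail]
  gcongr

lemma fracPerIntegrand_smul {r : ℝ} (hr : 0 < r) (E : Set (EuclideanSpace ℝ (Fin n)))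
    (p : EuclideanSpace ℝ (Fin n) × EuclideanSpace ℝ (Fin n)) :
    fracPerIntegrand n s (r • E) (r • p) =
      ENNReal.ofReal (r ^ (-(n : ℝ) - s)) * fracPerIntegrand n s E p := by
  classical
  simp only [fracPerIntegrand, fracKernel, Prod.smul_fst, Prod.smul_snd, Set.indicator_apply,
    Set.smul_mem_smul_set_iff₀ hr.ne', dist_smul₀, Real.norm_of_nonneg hr.le,
    Real.mul_rpow hr.le dist_nonneg]
  rw [← ENNReal.ofReal_mul (by positivity)]
  ring_nf

lemma fracPer_smul_univ {r : ℝ} (hr : 0 < r) (E : Set (EuclideanSpace ℝ (Fin n))) :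
    fracPer n s (r • E) univ = ENNReal.ofReal (r ^ ((n : ℝ) - s)) * fracPer n s E univ := by
  have hdim : Module.finrank ℝ (EuclideanSpace ℝ (Fin n) × EuclideanSpace ℝ (Fin n)) = 2 * n := by
    simp [Module.finrank_prod, two_mul]
  have : Measure.IsAddHaarMeasure
      (volume : Measure (EuclideanSpace ℝ (Fin n) × EuclideanSpace ℝ (Fin n))) :=
    Measure.prod.instIsAddHaarMeasure _ _
  have hscale : r ^ (-(n : ℝ) - s) * |((r⁻¹) ^ (2 * n))⁻¹| = r ^ ((n : ℝ) - s) := by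
    rw [inv_pow, inv_inv, abs_of_pos (by positivity), ← Real.rpow_natCast,
      ← Real.rpow_add hr]
    push_cast
    ring_nf
  have hint : ∫⁻ p, fracPerIntegrand n s (r • E) p =
      ENNReal.ofReal (r ^ ((n : ℝ) - s)) * ∫⁻ p, fracPerIntegrand n s E p := by
    calc ∫⁻ p, fracPerIntegrand n s (r • E) p
        = ∫⁻ p, ENNReal.ofReal (r ^ (-(n : ℝ) - s)) * fracPerIntegrand n s E (r⁻¹ • p) := by
          simp_rw [← fracPerIntegrand_smul hr, smul_inv_smul₀ hr.ne']
      _ = ENNReal.ofReal (r ^ (-(n : ℝ) - s)) * ∫⁻ p, fracPerIntegrand n s E (r⁻¹ • p) :=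
          lintegral_const_mul' _ _ ENNReal.ofReal_ne_top
      _ = _ := by
          rw [lintegral_comp_smul_of_isAddHaarMeasure _ (inv_ne_zero hr.ne'), hdim, ← mul_assoc,
            ← ENNReal.ofReal_mul (by positivity), hscale]
  rw [fracPer_univ_eq_lintegral, fracPer_univ_eq_lintegral, hint, mul_left_comm]

end FracPer

lemma measurableSet_Kset : MeasurableSet Kset := by
  unfold Kset
  measurability

lemma measurableSet_Ωex : MeasurableSet Ωex := measurableSet_ball.diff measurableSet_Kset

lemma Kset_subset_closedBall : Kset ⊆ closedBall 0 1 := by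
  intro x hx
  rw [mem_closedBall_zero_iff, EuclideanSpace.norm_eq, Fin.sum_univ_two, Real.sqrt_le_one]
  simpa only [Real.norm_eq_abs, sq_abs] using hx.1

lemma closedBall_one_subset_Btwo : closedBall (0 : EuclideanSpace ℝ (Fin 2)) 1 ⊆ Btwo :=
  closedBall_subset_ball one_lt_two

lemma closedBall_diff_Ωex : closedBall 0 1 \ Ωex = Kset := by
  rw [Ωex, sdiff_sdiff_right, sdiff_eq_empty.2 closedBall_one_subset_Btwo, empty_union,
    inter_eq_right.2 Kset_subset_closedBall]

lemma Kset_diff_Ωex : Kset \ Ωex = Kset :=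
  sdiff_eq_self_iff_disjoint.2 disjoint_sdiff_left

lemma Btwo_diff_Ωex : Btwo \ Ωex = Kset :=
  sdiff_sdiff_cancel_left (Kset_subset_closedBall.trans closedBall_one_subset_Btwo)

lemma fracPer_closedBall_eq_Bone (s : ℝ) :
    fracPer 2 s (closedBall 0 1) univ = fracPer 2 s Bone univ :=
  fracPer_congr_ae (ae_eq_of_subset_of_measure_ge ball_subset_closedBall
    (Measure.addHaar_closedBall_eq_addHaar_ball _ _ _).le measurableSet_ball.nullMeasurableSet
    (measure_closedBall_lt_top).ne).symm _

lemma fracPer_Bone_pos (s : ℝ) : 0 < fracPer 2 s Bone univ := by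
  refine fracPer_univ_pos measurableSet_ball (measure_ball_pos _ _ one_pos).ne' ?_
  obtain ⟨x, hx⟩ := NormedSpace.exists_lt_norm ℝ (EuclideanSpace ℝ (Fin 2)) 1
  refine fun h => isClosed_closedBall.isOpen_compl.measure_ne_zero volume ?_
    (measure_mono_null (compl_subset_compl.2 ball_subset_closedBall) h)
  exact ⟨x, by simpa using hx⟩

lemma fracPer_Bone_lt_Btwo {s : ℝ} (hs : s < 2) (hfin : fracPer 2 s Bone univ ≠ ⊤) :
    fracPer 2 s Bone univ < fracPer 2 s Btwo univ := by
  rw [Btwo, ← smul_unitBall_of_pos two_pos, fracPer_smul_univ two_pos, ← Bone]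
  have hscale : 1 < ENNReal.ofReal (2 ^ ((2 : ℝ) - s)) :=
    ENNReal.one_lt_ofReal.2 (Real.one_lt_rpow one_lt_two (by linarith))
  simpa using ENNReal.mul_lt_mul_left (fracPer_Bone_pos s).ne' hfin hscale

theorem sPerimeter_minimizer_nontrivial (s : ℝ) (hs : s ∈ Set.Ioo (0 : ℝ) 1)
    (hper : fracPer 2 s Bone Set.univ < fracPer 2 s Kset Set.univ)
    (E : Set (EuclideanSpace ℝ (Fin 2))) (hEm : MeasurableSet E)
    (hEdat : volume (symmDiff (E \ Ωex) Kset) = 0)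
    (hmin : ∀ F : Set (EuclideanSpace ℝ (Fin 2)), MeasurableSet F →
      volume (symmDiff (F \ Ωex) Kset) = 0 → fracPer 2 s E Ωex ≤ fracPer 2 s F Ωex) :
    0 < volume (E ∩ Ωex) ∧ volume (E ∩ Ωex) < volume Ωex := by
  have hout := measure_symmDiff_eq_zero_iff.1 hEdat
  have hle (F : Set (EuclideanSpace ℝ (Fin 2))) (hFE : F =ᵐ[volume] E) (hF : F \ Ωex = Kset) :
      fracPer 2 s F univ ≤ fracPer 2 s Bone univ := by
    rw [← fracPer_closedBall_eq_Bone]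
    refine fracPer_univ_le_of_diff_eq measurableSet_Ωex (hF.trans closedBall_diff_Ωex.symm) ?_
    rw [fracPer_congr_ae hFE]
    exact hmin _ measurableSet_closedBall
      (by rw [closedBall_diff_Ωex, symmDiff_self, bot_eq_empty, measure_empty])
  constructor
  · refine pos_iff_ne_zero.2 fun h₀ => (hle Kset ?_ Kset_diff_Ωex).not_gt hper
    simpa only [Set.sdiff_union_inter, union_empty] using (hout.union (ae_eq_empty.2 h₀)).symm
  · refine (measure_mono inter_subset_right).lt_of_ne fun hfull => ?_
    have hin : (E ∩ Ωex : Set _) =ᵐ[volume] Ωex := ae_eq_of_subset_of_measure_ge inter_subset_right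
      hfull.ge (hEm.inter measurableSet_Ωex).nullMeasurableSet
      ((measure_mono sdiff_subset).trans_lt measure_ball_lt_top).ne
    have hB : Btwo =ᵐ[volume] E := by
      simpa only [Set.sdiff_union_inter, Ωex, Set.union_sdiff_cancel
        (Kset_subset_closedBall.trans closedBall_one_subset_Btwo)] using (hout.union hin).symm
    exact (hle Btwo hB Btwo_diff_Ωex).not_gt
      (fracPer_Bone_lt_Btwo (by linarith [hs.2]) hper.ne_top)

end
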